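/- Let Q : Ω → ℝ be integrable with E[Q] < 0, let b : Ω → [0,∞) be tempered, and for each j ∈ ℕ let η_j : Ω → [0,∞) be measurable with η_j(ω) ≤ b(θ^j ω) for all ω. If η_j → 0 in probability as j → ∞, then the random variables S_k(ω) = Σ_{j=0}^{k} exp( Σ_{j'=j}^{k} Q(θ^{j'} ω) )·η_j(ω) converge to 0 in probability as k → ∞. -/

import Mathlib

open Filter MeasureTheory

/-- A measurable function `b : Ω → [0,∞)` is *tempered* with respect to an invertible
measure-preserving transformation `θ` (with inverse `θinv`) if for a.e. `ω` one has
`(1/|n|) · log⁺ b(θⁿ ω) → 0` as `|n| → ∞` (`n ∈ ℤ`), where `log⁺ t = max (log t) 0`. -/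
def IsTempered {Ω : Type*} [MeasurableSpace Ω] (μ : MeasureTheory.Measure Ω)
    (θ θinv : Ω → Ω) (b : Ω → ℝ) : Prop :=
  ∀ᵐ ω ∂μ,
    Tendsto (fun n : ℕ => max (Real.log (b (θ^[n] ω))) 0 / (n : ℝ)) atTop (nhds 0) ∧
    Tendsto (fun n : ℕ => max (Real.log (b (θinv^[n] ω))) 0 / (n : ℝ)) atTop (nhds 0)

/-!
Write `σ = θ⁻¹` and `B n = ∑_{l < n} Q ∘ σ^l` for the Birkhoff sums of `Q` along `σ`. As `σ^k`
preserves `μ`, the law of `S k` is that of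
`S k ∘ σ^k = ∑_{i ≤ k} exp (B (i + 1)) · η (k - i) ∘ σ^k`.
Since `σ` is ergodic and `E[Q] < 0`, Garsia's maximal ergodic lemma gives `B n ≤ C - c n` almost
surely for `c = -E[Q] / 2`, and temperedness gives `b ∘ σ^i ≤ C' e^{c i / 2}`. So the terms are
dominated by the almost surely summable weights `exp (B (i + 1)) · b ∘ σ^i`. Each single term tends
to `0` in probability, because `η (k - i) ∘ σ^k` has the law of `η (k - i)`, and the tails of the
dominating series tend to `0` almost surely; a Tannery-type argument in measure concludes.
-/

namespace MeasureTheory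

variable {α ι E : Type*} {m : MeasurableSpace α} {μ : Measure α} {l : Filter ι}

section SeminormedAddCommGroup

variable [SeminormedAddCommGroup E]

theorem TendstoInMeasure.add {f g : ι → α → E} {f₀ g₀ : α → E}
    (hf : TendstoInMeasure μ f l f₀) (hg : TendstoInMeasure μ g l g₀) :
    TendstoInMeasure μ (f + g) l (f₀ + g₀) := by
  rw [tendstoInMeasure_iff_norm] at *
  intro ε hε
  have hsum := (hf (ε / 2) (half_pos hε)).add (hg (ε / 2) (half_pos hε))
  rw [add_zero] at hsum
  refine tendsto_of_tendsto_of_tendsto_of_le_of_le tendsto_const_nhds hsum (fun _ => zero_le)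
    fun i => (measure_mono fun x hx => ?_).trans (measure_union_le _ _)
  have htri : ‖(f i x + g i x) - (f₀ x + g₀ x)‖ ≤ ‖f i x - f₀ x‖ + ‖g i x - g₀ x‖ := by
    rw [add_sub_add_comm]
    exact norm_add_le _ _
  by_contra! hx'
  simp only [Set.mem_union, Set.mem_ofPred_eq, not_or, not_le, Pi.add_apply] at hx hx'
  linarith

theorem tendstoInMeasure_const (c : α → E) : TendstoInMeasure μ (fun _ : ι => c) l c := by
  intro ε hε
  simpa [not_le.2 hε] using tendsto_const_nhds

theorem tendstoInMeasure_finset_sum {κ : Type*} (s : Finset κ) {f : κ → ι → α → E}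
    {g : κ → α → E} (hf : ∀ j ∈ s, TendstoInMeasure μ (f j) l (g j)) :
    TendstoInMeasure μ (fun i x => ∑ j ∈ s, f j i x) l (fun x => ∑ j ∈ s, g j x) := by
  classical
  induction s using Finset.induction_on with
  | empty => simpa using tendstoInMeasure_const (l := l) (μ := μ) (fun _ : α => (0 : E))
  | insert a s ha ih =>
    simp only [Finset.sum_insert ha]
    exact (hf a (Finset.mem_insert_self a s)).add
      (ih fun j hj => hf j (Finset.mem_insert_of_mem hj))

end SeminormedAddCommGroup

theorem TendstoInMeasure.const_mul [IsFiniteMeasure μ] {f : ℕ → α → ℝ} {f₀ g : α → ℝ}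
    (hf_meas : ∀ n, AEStronglyMeasurable (f n) μ) (hg : AEStronglyMeasurable g μ)
    (hf : TendstoInMeasure μ f atTop f₀) :
    TendstoInMeasure μ (fun n x => g x * f n x) atTop (fun x => g x * f₀ x) := by
  refine (exists_seq_tendstoInMeasure_atTop_iff (f := fun n x => g x * f n x)
    fun n => hg.mul (hf_meas n)).2 fun ns hns => ?_
  obtain ⟨ns', hns', hae⟩ := (hf.comp hns.tendsto_atTop).exists_seq_tendsto_ae
  exact ⟨ns', hns', hae.mono fun x hx => hx.const_mul (g x)⟩

theorem tendstoInMeasure_comp_measurePreserving_iff [PseudoEMetricSpace E] [MeasurableSpace E]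
    [OpensMeasurableSpace E] {f : ι → α → E} {φ : ι → α → α}
    (hφ : ∀ i, MeasurePreserving (φ i) μ μ) (hf : ∀ i, Measurable (f i)) (c : E) :
    TendstoInMeasure μ (fun i => f i ∘ φ i) l (fun _ => c) ↔
      TendstoInMeasure μ f l (fun _ => c) := by
  have hpre : ∀ ε i, μ {x | ε ≤ edist ((f i ∘ φ i) x) c} = μ {x | ε ≤ edist (f i x) c} :=
    fun ε i => (hφ i).measure_preimage ((hf i) (isClosed_le continuous_const
      (continuous_id.edist continuous_const)).measurableSet).nullMeasurableSet
  simp only [TendstoInMeasure, hpre]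

theorem TendstoInMeasure.mul_comp_iterate_sub [IsFiniteMeasure μ] {σ : α → α}
    (hσ : MeasurePreserving σ μ μ) {η : ℕ → α → ℝ} (hη_meas : ∀ j, Measurable (η j))
    (hη : TendstoInMeasure μ η atTop 0) {g : α → ℝ} (hg : Measurable g) (i : ℕ) :
    TendstoInMeasure μ (fun k x => g x * η (k - i) (σ^[k] x)) atTop 0 := by
  have hshift := (tendstoInMeasure_comp_measurePreserving_iff (fun k => hσ.iterate k)
    (fun k => hη_meas (k - i)) 0).2 (hη.comp (tendsto_sub_atTop_nat i))
  have h := hshift.const_mul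
    (fun k => ((hη_meas (k - i)).comp (hσ.measurable.iterate k)).aestronglyMeasurable)
    hg.aestronglyMeasurable
  simp only [Function.comp_apply, mul_zero] at h
  exact h

theorem tendstoInMeasure_of_eventually_abs_le_add {κ : Type*} {l' : Filter κ} [l'.NeBot]
    {f : ι → α → ℝ} {g : κ → ι → α → ℝ} {h : κ → α → ℝ}
    (hg : ∀ m, TendstoInMeasure μ (g m) l 0) (hh : TendstoInMeasure μ h l' 0)
    (hle : ∀ m, ∀ᶠ i in l, ∀ᵐ x ∂μ, |f i x| ≤ |g m i x| + |h m x|) :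
    TendstoInMeasure μ f l 0 := by
  simp only [tendstoInMeasure_iff_norm, Pi.zero_apply, sub_zero, Real.norm_eq_abs] at *
  intro ε hε
  rw [ENNReal.tendsto_nhds_zero]
  intro δ hδ
  have hδ₂ : 0 < δ / 2 := ENNReal.half_pos hδ.ne'
  obtain ⟨m, hm⟩ := (ENNReal.tendsto_nhds_zero.1 (hh (ε / 2) (half_pos hε)) _ hδ₂).exists
  filter_upwards [ENNReal.tendsto_nhds_zero.1 (hg m (ε / 2) (half_pos hε)) _ hδ₂, hle m]
    with i hi hle_i
  calc μ {x | ε ≤ |f i x|}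
      ≤ μ ({x | ε / 2 ≤ |g m i x|} ∪ {x | ε / 2 ≤ |h m x|}) := by
        refine measure_mono_ae (hle_i.mono fun x hx (hεx : ε ≤ |f i x|) => ?_)
        change x ∈ {x | ε / 2 ≤ |g m i x|} ∪ {x | ε / 2 ≤ |h m x|}
        simp only [Set.mem_union, Set.mem_ofPred_eq]
        by_contra! hx'
        linarith
    _ ≤ δ / 2 + δ / 2 := (measure_union_le _ _).trans (add_le_add hi hm)
    _ = δ := ENNReal.add_halves δ

theorem tendstoInMeasure_sum_range_of_abs_le_summable [IsFiniteMeasure μ]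
    {u : ℕ → ℕ → α → ℝ} {d : ℕ → α → ℝ}
    (hu : ∀ i, TendstoInMeasure μ (fun k => u k i) atTop 0)
    (hd_meas : ∀ i, AEStronglyMeasurable (d i) μ)
    (hud : ∀ k i, i ≤ k → ∀ x, |u k i x| ≤ d i x)
    (hd : ∀ᵐ x ∂μ, Summable fun i => d i x) :
    TendstoInMeasure μ (fun k x => ∑ i ∈ Finset.range (k + 1), u k i x) atTop 0 := by
  have hd_nonneg : ∀ i x, 0 ≤ d i x := fun i x => (abs_nonneg _).trans (hud i i le_rfl x)
  have htail : TendstoInMeasure μ (fun m x => ∑' i, d (i + m) x) atTop 0 := by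
    refine tendstoInMeasure_of_tendsto_ae (fun m => ?_)
      (hd.mono fun x _ => tendsto_sum_nat_add fun i => d i x)
    exact aestronglyMeasurable_of_tendsto_ae atTop
      (fun n => Finset.aestronglyMeasurable_fun_sum (Finset.range n) fun i _ => hd_meas (i + m))
      (hd.mono fun x hx => ((summable_nat_add_iff m).2 hx).hasSum.tendsto_sum_nat)
  have hhead : ∀ m, TendstoInMeasure μ (fun k x => ∑ i ∈ Finset.range m, u k i x) atTop 0 :=
    fun m => by
      have h := tendstoInMeasure_finset_sum (Finset.range m) fun i _ => hu i
      simp only [Pi.zero_apply, Finset.sum_const_zero] at h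
      exact h
  refine tendstoInMeasure_of_eventually_abs_le_add hhead htail fun m => ?_
  filter_upwards [eventually_ge_atTop m] with k hk
  filter_upwards [hd] with x hx
  rw [← Finset.sum_range_add_sum_Ico _ (by omega : m ≤ k + 1)]
  refine (abs_add_le _ _).trans (add_le_add le_rfl ?_)
  calc |∑ i ∈ Finset.Ico m (k + 1), u k i x|
      ≤ ∑ i ∈ Finset.Ico m (k + 1), d i x :=
        (Finset.abs_sum_le_sum_abs _ _).trans <| Finset.sum_le_sum fun i hi =>
          hud k i (Nat.lt_succ_iff.1 (Finset.mem_Ico.1 hi).2) x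
    _ = ∑ i ∈ Finset.range (k + 1 - m), d (i + m) x := by
        rw [Finset.sum_Ico_eq_sum_range]
        simp only [add_comm m]
    _ ≤ ∑' i, d (i + m) x :=
        Summable.sum_le_tsum _ (fun i _ => hd_nonneg _ _) ((summable_nat_add_iff m).2 hx)
    _ ≤ |∑' i, d (i + m) x| := le_abs_self _

end MeasureTheory

section BirkhoffSum

variable {α : Type*} {f : α → α} {g : α → ℝ}

/-- `birkhoffMax f g n x = max_{0 ≤ k ≤ n} birkhoffSum f g k x`, through Garsia's recursion. -/
noncomputable def birkhoffMax (f : α → α) (g : α → ℝ) : ℕ → α → ℝ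
  | 0 => 0
  | n + 1 => fun x => max 0 (g x + birkhoffMax f g n (f x))

theorem birkhoffMax_nonneg : ∀ n x, 0 ≤ birkhoffMax f g n x
  | 0, _ => le_rfl
  | _ + 1, _ => le_max_left _ _

theorem birkhoffMax_le_succ : ∀ n x, birkhoffMax f g n x ≤ birkhoffMax f g (n + 1) x
  | 0, x => birkhoffMax_nonneg 1 x
  | n + 1, x => max_le_max le_rfl (add_le_add le_rfl (birkhoffMax_le_succ n (f x)))

theorem birkhoffSum_le_birkhoffMax :
    ∀ {k n : ℕ}, k ≤ n → ∀ x, birkhoffSum f g k x ≤ birkhoffMax f g n x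
  | 0, n, _, x => by simpa using birkhoffMax_nonneg n x
  | _ + 1, 0, hk, _ => absurd hk (by omega)
  | k + 1, n + 1, hk, x => by
    rw [birkhoffSum_succ']
    exact le_max_of_le_right (add_le_add le_rfl (birkhoffSum_le_birkhoffMax (by omega) (f x)))

theorem bddAbove_range_birkhoffSum_apply_iff (x : α) :
    BddAbove (Set.range fun n => birkhoffSum f g n (f x)) ↔
      BddAbove (Set.range fun n => birkhoffSum f g n x) := by
  simp only [bddAbove_def, Set.forall_mem_range]
  constructor
  · rintro ⟨C, hC⟩
    refine ⟨max 0 (g x + C), fun n => ?_⟩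
    cases n with
    | zero => simp
    | succ n => exact (birkhoffSum_succ' f g n x).trans_le (le_max_of_le_right (by linarith [hC n]))
  · rintro ⟨C, hC⟩
    exact ⟨C - g x, fun n => by linarith [birkhoffSum_succ' f g n x, hC (n + 1)]⟩

theorem birkhoffMax_succ_sub_le_indicator (n : ℕ) (x : α) :
    birkhoffMax f g (n + 1) x - birkhoffMax f g n (f x) ≤
      {y | 0 < birkhoffMax f g (n + 1) y}.indicator g x := by
  by_cases hx : 0 < birkhoffMax f g (n + 1) x
  · rw [Set.indicator_of_mem (s := {y | 0 < birkhoffMax f g (n + 1) y}) hx]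
    have hpos : 0 < g x + birkhoffMax f g n (f x) := (lt_max_iff.1 hx).resolve_left (lt_irrefl 0)
    simp only [birkhoffMax, max_eq_right hpos.le, add_sub_cancel_right, le_refl]
  · rw [Set.indicator_of_notMem (s := {y | 0 < birkhoffMax f g (n + 1) y}) hx]
    have hM_zero := le_antisymm (not_lt.1 hx) (birkhoffMax_nonneg (n + 1) x)
    linarith [birkhoffMax_nonneg (f := f) (g := g) n (f x)]

variable [MeasurableSpace α] {μ : Measure α}

theorem measurable_birkhoffMax (hf : Measurable f) (hg : Measurable g) :
    ∀ n, Measurable (birkhoffMax f g n)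
  | 0 => measurable_const
  | n + 1 => measurable_const.max (hg.add ((measurable_birkhoffMax hf hg n).comp hf))

theorem integrable_birkhoffMax (hf : MeasurePreserving f μ μ) (hg : Integrable g μ) :
    ∀ n, Integrable (birkhoffMax f g n) μ
  | 0 => integrable_zero _ _ _
  | n + 1 => (integrable_zero _ _ _).sup
      (hg.add (hf.integrable_comp_of_integrable (integrable_birkhoffMax hf hg n)))

theorem setIntegral_birkhoffMax_pos_nonneg (hf : MeasurePreserving f μ μ) (hg_meas : Measurable g)
    (hg : Integrable g μ) (n : ℕ) :
    0 ≤ ∫ x in {x | 0 < birkhoffMax f g (n + 1) x}, g x ∂μ := by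
  have hM := measurable_birkhoffMax hf.measurable hg_meas
  have hMi := integrable_birkhoffMax hf hg
  have hMf : Integrable (fun x => birkhoffMax f g n (f x)) μ :=
    hf.integrable_comp_of_integrable (hMi n)
  have hcomp : ∫ x, birkhoffMax f g n (f x) ∂μ = ∫ x, birkhoffMax f g n x ∂μ := by
    rw [← integral_map hf.measurable.aemeasurable (hf.map_eq ▸ (hM n).aestronglyMeasurable),
      hf.map_eq]
  rw [← integral_indicator (measurableSet_lt measurable_const (hM (n + 1)))]
  calc 0 ≤ ∫ x, birkhoffMax f g (n + 1) x ∂μ - ∫ x, birkhoffMax f g n x ∂μ :=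
        sub_nonneg.2 (integral_mono (hMi n) (hMi (n + 1)) (birkhoffMax_le_succ n))
    _ = ∫ x, (birkhoffMax f g (n + 1) x - birkhoffMax f g n (f x)) ∂μ := by
        rw [integral_sub (hMi (n + 1)) hMf, hcomp]
    _ ≤ _ := integral_mono ((hMi (n + 1)).sub hMf)
        (hg.indicator (measurableSet_lt measurable_const (hM (n + 1))))
        (birkhoffMax_succ_sub_le_indicator n)

/-- Garsia's maximal ergodic lemma. -/
theorem integral_nonneg_of_ae_exists_birkhoffSum_pos (hf : MeasurePreserving f μ μ)
    (hg_meas : Measurable g) (hg : Integrable g μ)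
    (hpos : ∀ᵐ x ∂μ, ∃ n, 0 < birkhoffSum f g n x) :
    0 ≤ ∫ x, g x ∂μ := by
  set A : ℕ → Set α := fun n => {x | 0 < birkhoffMax f g (n + 1) x}
  have hA_meas (n : ℕ) : MeasurableSet (A n) :=
    measurableSet_lt measurable_const (measurable_birkhoffMax hf.measurable hg_meas (n + 1))
  have hA_mono : Monotone A :=
    monotone_nat_of_le_succ fun n x hx => lt_of_lt_of_le hx (birkhoffMax_le_succ (n + 1) x)
  have hA_cover : (⋃ n, A n) =ᵐ[μ] (Set.univ : Set α) := by
    rw [eventuallyEq_set]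
    filter_upwards [hpos] with x ⟨n, hn⟩
    simp only [Set.mem_iUnion, Set.mem_univ, iff_true]
    cases n with
    | zero => simp at hn
    | succ k => exact ⟨k, hn.trans_le (birkhoffSum_le_birkhoffMax le_rfl x)⟩
  have hlim := tendsto_setIntegral_of_monotone hA_meas hA_mono hg.integrableOn
  rw [setIntegral_congr_set hA_cover, setIntegral_univ] at hlim
  exact ge_of_tendsto' hlim (setIntegral_birkhoffMax_pos_nonneg hf hg_meas hg)

theorem Ergodic.ae_bddAbove_birkhoffSum_of_integral_neg (hf : Ergodic f μ)
    (hg_meas : Measurable g) (hg : Integrable g μ) (hneg : ∫ x, g x ∂μ < 0) :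
    ∀ᵐ x ∂μ, BddAbove (Set.range fun n => birkhoffSum f g n x) := by
  have hE : MeasurableSet {x | BddAbove (Set.range fun n => birkhoffSum f g n x)} :=
    measurableSet_bddAbove_range fun n =>
      Finset.measurable_sum _ fun k _ => hg_meas.comp (hf.measurable.iterate k)
  refine (hf.ae_mem_or_ae_notMem hE (Set.ext bddAbove_range_birkhoffSum_apply_iff)).resolve_right
    fun hunbdd => hneg.not_ge ?_
  refine integral_nonneg_of_ae_exists_birkhoffSum_pos hf.toMeasurePreserving hg_meas hg ?_
  filter_upwards [hunbdd] with x hx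
  obtain ⟨_, ⟨n, rfl⟩, hn⟩ := not_bddAbove_iff.1 hx 0
  exact ⟨n, hn⟩

theorem Ergodic.ae_exists_birkhoffSum_le_sub_mul [IsProbabilityMeasure μ] (hf : Ergodic f μ)
    (hg_meas : Measurable g) (hg : Integrable g μ) {c : ℝ} (hc : c < -∫ x, g x ∂μ) :
    ∀ᵐ x ∂μ, ∃ C, ∀ n : ℕ, birkhoffSum f g n x ≤ C - c * n := by
  have hbdd := hf.ae_bddAbove_birkhoffSum_of_integral_neg (g := fun x => g x + c)
    (hg_meas.add_const c) (hg.add (integrable_const c)) (by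
      rw [integral_add hg (integrable_const c), integral_const, probReal_univ, one_smul]
      linarith)
  filter_upwards [hbdd] with x ⟨C, hC⟩
  refine ⟨C, fun n => ?_⟩
  have hn := hC ⟨n, rfl⟩
  simp only [birkhoffSum, Finset.sum_add_distrib, Finset.sum_const, Finset.card_range,
    nsmul_eq_mul] at hn ⊢
  linarith

theorem Ergodic.of_leftInverse {f' : α → α} (hf : Ergodic f μ) (hf' : MeasurePreserving f' μ μ)
    (h : Function.LeftInverse f' f) : Ergodic f' μ :=
  ⟨hf', ⟨fun s hs hs' => hf.aeconst_set hs (by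
    nth_rw 1 [← hs']
    rw [← Set.preimage_comp, h.comp_eq_id, Set.preimage_id])⟩⟩

end BirkhoffSum

theorem exists_le_mul_exp_of_tendsto_log_div {x : ℕ → ℝ}
    (hx : Tendsto (fun n : ℕ => max (Real.log (x n)) 0 / n) atTop (nhds 0)) {c : ℝ} (hc : 0 < c) :
    ∃ C, ∀ n : ℕ, x n ≤ C * Real.exp (c * n) := by
  have hev : ∀ᶠ n : ℕ in atTop, x n * Real.exp (-(c * n)) ≤ 1 := by
    filter_upwards [hx.eventually_lt_const hc, eventually_gt_atTop 0] with n hn hn₀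
    rw [div_lt_iff₀ (by positivity)] at hn
    calc x n * Real.exp (-(c * n)) ≤ Real.exp (max (Real.log (x n)) 0) * Real.exp (-(c * n)) := by
          gcongr
          exact (Real.le_exp_log _).trans (Real.exp_le_exp.2 (le_max_left _ _))
      _ ≤ Real.exp (c * n) * Real.exp (-(c * n)) := by gcongr
      _ = 1 := by rw [← Real.exp_add, add_neg_cancel, Real.exp_zero]
  obtain ⟨C, hC⟩ := (isBoundedUnder_of_eventually_le hev).bddAbove_range
  refine ⟨C, fun n => ?_⟩
  calc x n = x n * Real.exp (-(c * n)) * Real.exp (c * n) := by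
        rw [mul_assoc, ← Real.exp_add, neg_add_cancel, Real.exp_zero, mul_one]
    _ ≤ C * Real.exp (c * n) := by gcongr; exact hC ⟨n, rfl⟩

theorem summable_exp_mul_of_le_sub_mul {B x : ℕ → ℝ} {c C D : ℝ} (hc : 0 < c)
    (hB : ∀ n : ℕ, B n ≤ C - c * n) (hx : ∀ n : ℕ, x n ≤ D * Real.exp (c / 2 * n))
    (hx₀ : ∀ n, 0 ≤ x n) :
    Summable fun n => Real.exp (B n) * x n := by
  have hr : Real.exp (-(c / 2)) < 1 := Real.exp_lt_one_iff.2 (by linarith)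
  refine Summable.of_nonneg_of_le (fun n => mul_nonneg (Real.exp_pos _).le (hx₀ n)) (fun n => ?_)
    ((summable_geometric_of_lt_one (Real.exp_pos _).le hr).mul_left (D * Real.exp C))
  calc Real.exp (B n) * x n ≤ Real.exp (C - c * n) * (D * Real.exp (c / 2 * n)) :=
        mul_le_mul (Real.exp_le_exp.2 (hB n)) (hx n) (hx₀ n) (Real.exp_pos _).le
    _ = D * Real.exp C * Real.exp (-(c / 2)) ^ n := by
        rw [← Real.exp_nat_mul, mul_assoc, ← Real.exp_add, mul_left_comm, ← Real.exp_add]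
        ring_nf

theorem Function.LeftInverse.iterate_apply_iterate {α : Type*} {θ σ : α → α}
    (h : Function.LeftInverse θ σ) {a k : ℕ} (hak : a ≤ k) (x : α) :
    θ^[a] (σ^[k] x) = σ^[k - a] x := by
  obtain ⟨d, rfl⟩ := Nat.exists_eq_add_of_le hak
  rw [Nat.add_sub_cancel_left, Function.iterate_add_apply, h.iterate a]

theorem Function.LeftInverse.sum_Icc_comp_iterate {α M : Type*} [AddCommMonoid M]
    {θ σ : α → α} (h : Function.LeftInverse θ σ) (Q : α → M) {j k : ℕ} (hjk : j ≤ k) (x : α) :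
    ∑ j' ∈ Finset.Icc j k, Q (θ^[j'] (σ^[k] x)) = birkhoffSum σ Q (k - j + 1) x := by
  rw [Finset.sum_congr rfl fun j' hj' => by
    rw [h.iterate_apply_iterate (Finset.mem_Icc.1 hj').2]]
  refine Finset.sum_nbij' (fun j' => k - j') (fun l => k - l) ?_ ?_ ?_ ?_ fun _ _ => rfl <;>
    intro i hi <;> simp only [Finset.mem_Icc, Finset.mem_range] at hi ⊢ <;> omega

theorem Function.LeftInverse.sum_exp_sum_Icc_mul_comp_iterate {α : Type*} {θ σ : α → α}
    (h : Function.LeftInverse θ σ) (Q : α → ℝ) (η : ℕ → α → ℝ) (k : ℕ) (x : α) :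
    ∑ j ∈ Finset.range (k + 1), Real.exp (∑ j' ∈ Finset.Icc j k, Q (θ^[j'] (σ^[k] x))) *
        η j (σ^[k] x) =
      ∑ i ∈ Finset.range (k + 1), Real.exp (birkhoffSum σ Q (i + 1) x) * η (k - i) (σ^[k] x) := by
  rw [← Finset.sum_range_reflect]
  refine Finset.sum_congr rfl fun i hi => ?_
  have hik := Finset.mem_range.1 hi
  rw [h.sum_Icc_comp_iterate Q (by omega), show k + 1 - 1 - i = k - i by omega,
    show k - (k - i) + 1 = i + 1 by omega]

section ErgodicWeights

variable {α : Type*} [MeasurableSpace α] {μ : Measure α}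

theorem Ergodic.ae_summable_exp_birkhoffSum_mul [IsProbabilityMeasure μ] {σ : α → α}
    (hσ : Ergodic σ μ) {Q b : α → ℝ}
    (hQ_meas : Measurable Q) (hQ : Integrable Q μ) (hQneg : ∫ x, Q x ∂μ < 0)
    (hb_nonneg : ∀ x, 0 ≤ b x)
    (hb : ∀ᵐ x ∂μ, Tendsto (fun n : ℕ => max (Real.log (b (σ^[n] x))) 0 / n) atTop (nhds 0)) :
    ∀ᵐ x ∂μ, Summable fun i => Real.exp (birkhoffSum σ Q (i + 1) x) * b (σ^[i] x) := by
  have hc : 0 < -(∫ x, Q x ∂μ) / 2 := by linarith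
  filter_upwards [hσ.ae_exists_birkhoffSum_le_sub_mul hQ_meas hQ (c := -(∫ x, Q x ∂μ) / 2)
    (by linarith), hb] with x ⟨C, hC⟩ hbx
  obtain ⟨D, hD⟩ := exists_le_mul_exp_of_tendsto_log_div hbx (half_pos hc)
  refine summable_exp_mul_of_le_sub_mul hc (C := C) (fun n => ?_) hD fun n => hb_nonneg _
  have := hC (n + 1)
  push_cast at this
  linarith

theorem Ergodic.tendstoInMeasure_sum_exp_birkhoffSum_mul [IsProbabilityMeasure μ]
    {θ σ : α → α} (hσ : Ergodic σ μ) (hθσ : Function.LeftInverse θ σ)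
    {Q : α → ℝ} (hQ_meas : Measurable Q) (hQ : Integrable Q μ) (hQneg : ∫ x, Q x ∂μ < 0)
    {b : α → ℝ} (hb_meas : Measurable b) (hb_nonneg : ∀ x, 0 ≤ b x)
    (hb : ∀ᵐ x ∂μ, Tendsto (fun n : ℕ => max (Real.log (b (σ^[n] x))) 0 / n) atTop (nhds 0))
    {η : ℕ → α → ℝ} (hη_meas : ∀ j, Measurable (η j)) (hη_nonneg : ∀ j x, 0 ≤ η j x)
    (hη_le : ∀ j x, η j x ≤ b (θ^[j] x)) (hη : TendstoInMeasure μ η atTop 0) :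
    TendstoInMeasure μ (fun k x => ∑ i ∈ Finset.range (k + 1),
      Real.exp (birkhoffSum σ Q (i + 1) x) * η (k - i) (σ^[k] x)) atTop 0 := by
  have hB_meas (i : ℕ) : Measurable fun x => Real.exp (birkhoffSum σ Q (i + 1) x) :=
    (Finset.measurable_sum _ fun l _ => hQ_meas.comp (hσ.measurable.iterate l)).exp
  refine tendstoInMeasure_sum_range_of_abs_le_summable
    (d := fun i x => Real.exp (birkhoffSum σ Q (i + 1) x) * b (σ^[i] x))
    (fun i => hη.mul_comp_iterate_sub hσ.toMeasurePreserving hη_meas (hB_meas i) i)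
    (fun i => ((hB_meas i).mul (hb_meas.comp (hσ.measurable.iterate i))).aestronglyMeasurable)
    (fun k i hik x => ?_) (hσ.ae_summable_exp_birkhoffSum_mul hQ_meas hQ hQneg hb_nonneg hb)
  rw [abs_of_nonneg (mul_nonneg (Real.exp_pos _).le (hη_nonneg _ _))]
  gcongr
  calc η (k - i) (σ^[k] x) ≤ b (θ^[k - i] (σ^[k] x)) := hη_le _ _
    _ = b (σ^[i] x) := by rw [hθσ.iterate_apply_iterate (Nat.sub_le k i), Nat.sub_sub_self hik]

end ErgodicWeights

/-- Let `θ` be an invertible ergodic measure-preserving transformation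
of a probability space, `Q` integrable with `E[Q] < 0`, `b ≥ 0` tempered, and for each
`j ∈ ℕ` let `η j ≥ 0` be measurable with `η j ω ≤ b (θ^j ω)`.  If `η j → 0` in
probability, then `S k ω = ∑_{j=0}^{k} exp(∑_{j'=j}^{k} Q(θ^{j'} ω)) · η j ω`
converges to `0` in probability as `k → ∞`. -/
theorem statement5
    {Ω : Type*} [MeasurableSpace Ω] {μ : Measure Ω} [IsProbabilityMeasure μ]
    {θ θinv : Ω → Ω}
    (hinv₁ : Function.LeftInverse θinv θ) (hinv₂ : Function.RightInverse θinv θ)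
    (hθ : Ergodic θ μ) (hθinv : MeasurePreserving θinv μ μ)
    {Q : Ω → ℝ} (hQ : Integrable Q μ) (hQneg : ∫ ω, Q ω ∂μ < 0)
    {b : Ω → ℝ} (hb_meas : Measurable b) (hb_nonneg : ∀ ω, 0 ≤ b ω)
    (hb_temp : IsTempered μ θ θinv b)
    {η : ℕ → Ω → ℝ} (hη_meas : ∀ j, Measurable (η j))
    (hη_nonneg : ∀ j ω, 0 ≤ η j ω)
    (hη_le : ∀ j ω, η j ω ≤ b (θ^[j] ω))
    (hη_tendsto : TendstoInMeasure μ η atTop 0) :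
    TendstoInMeasure μ
      (fun k ω => ∑ j ∈ Finset.range (k + 1),
        Real.exp (∑ j' ∈ Finset.Icc j k, Q (θ^[j'] ω)) * η j ω)
      atTop 0 := by
  obtain ⟨Q', hQ'_meas, hQQ'⟩ := hQ.aemeasurable
  have hθ_meas := hθ.measurable
  have hS_meas : TendstoInMeasure μ (fun k x => ∑ j ∈ Finset.range (k + 1),
      Real.exp (∑ j' ∈ Finset.Icc j k, Q' (θ^[j'] x)) * η j x) atTop 0 := by
    refine (tendstoInMeasure_comp_measurePreserving_iff (fun k => hθinv.iterate k)
      (fun k => by fun_prop) (0 : ℝ)).1 ?_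
    refine ((hθ.of_leftInverse hθinv hinv₁).tendstoInMeasure_sum_exp_birkhoffSum_mul hinv₂
      hQ'_meas (hQ.congr hQQ') (by rwa [← integral_congr_ae hQQ']) hb_meas hb_nonneg
      (hb_temp.mono fun _ h => h.2) hη_meas hη_nonneg hη_le hη_tendsto).congr_left
      fun k => ae_of_all _ fun x => ?_
    exact (hinv₂.sum_exp_sum_Icc_mul_comp_iterate Q' η k x).symm
  have hQ_orbit : ∀ᵐ x ∂μ, ∀ j : ℕ, Q' (θ^[j] x) = Q (θ^[j] x) := ae_all_iff.2 fun j =>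
    (hθ.toMeasurePreserving.iterate j).quasiMeasurePreserving.ae_eq_comp hQQ'.symm
  exact hS_meas.congr_left fun k => hQ_orbit.mono fun x hx => by simp only [hx]
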